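/- There exists θ₀ ∈ (π/2, π) such that for every θ ∈ (π/2, θ₀) there is a constant c > 0, independent of τ and z, with the property: for every time step τ > 0 and every z ∈ D(τ,θ) one has |δ_τ(e^{−zτ}) − z| ≤ c τ³ |z|⁴, where δ_τ is the BDF3 generating symbol. -/

import Mathlib

open Complex Set

/-- The BDF3 generating symbol `δ_τ(ξ) = τ⁻¹(11/6 − 3ξ + (3/2)ξ² − (1/3)ξ³)`. -/
noncomputable def bdf3 (τ : ℝ) (ξ : ℂ) : ℂ :=
  (τ : ℂ)⁻¹ * (11 / 6 - 3 * ξ + (3 / 2) * ξ ^ 2 - (1 / 3) * ξ ^ 3)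

/-- The region `D(τ,θ)`: nonzero `z` with either `|arg z| = θ` and `|Im z| ≤ π/τ`,
or `|z| ≤ 1/τ` and `|arg z| ≤ θ`. -/
def Dset (τ θ : ℝ) : Set ℂ :=
  {z : ℂ | z ≠ 0 ∧
    ((|z.arg| = θ ∧ |z.im| ≤ Real.pi / τ) ∨ (‖z‖ ≤ 1 / τ ∧ |z.arg| ≤ θ))}

/-!
With `w = z τ`, the defect `τ (δ_τ(e^{-w}) - z) = 11/6 - 3e^{-w} + (3/2)e^{-2w} - (1/3)e^{-3w} - w`
contains no terms of degree `≤ 3` in `w` (BDF3 has order 3), so it is a combination of the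
degree-4 Taylor remainders of `e^{-w}, e^{-2w}, e^{-3w}` and is at most
`(3 + (3/2)·2⁴ + (1/3)·3⁴) ‖w‖⁴ e^{3‖w‖} = 54 ‖w‖⁴ e^{3‖w‖}`.
On `D(τ,θ)` the product `‖z‖ τ` stays below `π / sin θ`: either `‖z‖ τ ≤ 1`, or `|arg z| = θ`
and then `‖z‖ sin θ = |Im z| ≤ π / τ`.
-/

noncomputable def expTaylorRemainder (n : ℕ) (x : ℂ) : ℂ :=
  exp x - ∑ m ∈ Finset.range n, x ^ m / m.factorial

lemma bdf3_exp_sub_eq {τ : ℝ} (hτ : τ ≠ 0) (z : ℂ) :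
    bdf3 τ (exp (-z * τ)) - z = (τ : ℂ)⁻¹ *
      (-3 * expTaylorRemainder 4 (-1 * (z * τ)) + 3 / 2 * expTaylorRemainder 4 (-2 * (z * τ))
        - 1 / 3 * expTaylorRemainder 4 (-3 * (z * τ))) := by
  have hτ' : (τ : ℂ) ≠ 0 := ofReal_ne_zero.2 hτ
  have h2 : exp (-2 * (z * τ)) = exp (-z * τ) ^ 2 := by rw [← exp_nat_mul]; ring_nf
  have h3 : exp (-3 * (z * τ)) = exp (-z * τ) ^ 3 := by rw [← exp_nat_mul]; ring_nf
  simp only [bdf3, expTaylorRemainder, h2, h3, Finset.sum_range_succ, Finset.sum_range_zero]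
  field_simp
  ring_nf

lemma norm_bdf3_exp_sub_le {τ : ℝ} (hτ : 0 < τ) (z : ℂ) :
    ‖bdf3 τ (exp (-z * τ)) - z‖ ≤ 54 * Real.exp (3 * (‖z‖ * τ)) * τ ^ 3 * ‖z‖ ^ 4 := by
  set w : ℂ := z * τ
  have hw : ‖w‖ = ‖z‖ * τ := by simp [w, abs_of_pos hτ]
  have hrem (k : ℂ) (hk : ‖k‖ ≤ 3) :
      ‖expTaylorRemainder 4 (-k * w)‖ ≤ ‖k‖ ^ 4 * (‖w‖ ^ 4 * Real.exp (3 * ‖w‖)) := by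
    calc ‖expTaylorRemainder 4 (-k * w)‖ ≤ ‖-k * w‖ ^ 4 * Real.exp ‖-k * w‖ :=
          norm_exp_sub_sum_le_norm_mul_exp _ 4
      _ ≤ ‖k‖ ^ 4 * (‖w‖ ^ 4 * Real.exp (3 * ‖w‖)) := by
          rw [norm_mul, norm_neg, mul_pow, mul_assoc]
          gcongr
  have h1 := hrem 1 (by norm_num)
  have h2 := hrem 2 (by norm_num)
  have h3 := hrem 3 (by norm_num)
  have hsum : ‖-3 * expTaylorRemainder 4 (-1 * w) + 3 / 2 * expTaylorRemainder 4 (-2 * w)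
      - 1 / 3 * expTaylorRemainder 4 (-3 * w)‖ ≤ 54 * (‖w‖ ^ 4 * Real.exp (3 * ‖w‖)) := by
    refine (norm_sub_le_of_le (norm_add_le _ _) le_rfl).trans ?_
    simp only [norm_mul] at h1 h2 h3 ⊢
    norm_num at h1 h2 h3 ⊢
    linarith
  calc ‖bdf3 τ (exp (-z * τ)) - z‖ ≤ τ⁻¹ * (54 * (‖w‖ ^ 4 * Real.exp (3 * ‖w‖))) := by
        rw [bdf3_exp_sub_eq hτ.ne', norm_mul, norm_inv, norm_real, Real.norm_of_nonneg hτ.le]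
        gcongr
    _ = 54 * Real.exp (3 * (‖z‖ * τ)) * τ ^ 3 * ‖z‖ ^ 4 := by
        rw [hw]
        field_simp

lemma norm_mul_le_of_mem_Dset {τ θ : ℝ} (hτ : 0 < τ) (hθ : θ ∈ Ioo 0 Real.pi) {z : ℂ}
    (hz : z ∈ Dset τ θ) : ‖z‖ * τ ≤ Real.pi / Real.sin θ := by
  have hsin : 0 < Real.sin θ := Real.sin_pos_of_pos_of_lt_pi hθ.1 hθ.2
  rw [le_div_iff₀ hsin]
  rcases hz.2 with ⟨harg, him⟩ | ⟨hnorm, -⟩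
  · have : ‖z‖ * Real.sin θ = |z.im| := by
      rw [← harg, ← Real.abs_sin_eq_sin_abs_of_abs_le_pi (abs_arg_le_pi z), ← abs_norm,
        ← abs_mul, norm_mul_sin_arg]
    calc ‖z‖ * τ * Real.sin θ = |z.im| * τ := by rw [← this]; ring
      _ ≤ Real.pi / τ * τ := by gcongr
      _ = Real.pi := div_mul_cancel₀ _ hτ.ne'
  · calc ‖z‖ * τ * Real.sin θ ≤ 1 / τ * τ * 1 := by
          gcongr
          exact Real.sin_le_one θ
      _ ≤ Real.pi := by rw [one_div_mul_cancel hτ.ne']; linarith [Real.pi_gt_three]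

theorem bdf3_symbol_consistency :
    ∃ θ₀ ∈ Ioo (Real.pi / 2) Real.pi, ∀ θ ∈ Ioo (Real.pi / 2) θ₀,
      ∃ c > (0 : ℝ),
        ∀ τ : ℝ, 0 < τ → ∀ z ∈ Dset τ θ,
          ‖bdf3 τ (Complex.exp (-z * τ)) - z‖ ≤
            c * τ ^ 3 * ‖z‖ ^ 4 := by
  -- Any `θ₀ < π` would do: the constant only has to control `exp (3 ‖z τ‖)` with `‖z τ‖ ≤ π / sin θ`.
  refine ⟨3 * Real.pi / 4, ⟨by linarith [Real.pi_pos], by linarith [Real.pi_pos]⟩, ?_⟩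
  rintro θ ⟨hθ₁, hθ₂⟩
  have hθ : θ ∈ Ioo 0 Real.pi := ⟨by linarith [Real.pi_pos], by linarith⟩
  refine ⟨54 * Real.exp (3 * (Real.pi / Real.sin θ)), by positivity, fun τ hτ z hz => ?_⟩
  calc ‖bdf3 τ (exp (-z * τ)) - z‖ ≤ 54 * Real.exp (3 * (‖z‖ * τ)) * τ ^ 3 * ‖z‖ ^ 4 :=
        norm_bdf3_exp_sub_le hτ z
    _ ≤ 54 * Real.exp (3 * (Real.pi / Real.sin θ)) * τ ^ 3 * ‖z‖ ^ 4 := by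
        gcongr
        exact norm_mul_le_of_mem_Dset hτ hθ hz
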